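/- Let S⊆T be a ring extension such that Hom_S(T/S, T)=0 (homomorphisms of left S-modules) and T is injective as a left S-module. Then T is isomorphic as a ring to the left maximal ring of quotients Q_max^l(S) of S, via an isomorphism fixing S. -/

import Mathlib

/-!
An `S`-linear map `L → T` on an intermediate module `S ⊆ L ⊆ T` that vanishes on `S` extends,
by injectivity of `T`, to a map `T → T` vanishing on `S`, which is zero; so `T` is a dense
extension of `S`. Given any dense extension `j : S → Q`, injectivity of `T` extends the inclusion
`S → T` along `j` to an `S`-linear `k : Q → T`. Density of `Q` forces `k` to be injective, and then
for fixed `y` the `S`-linear map `x ↦ k (x * y) - k x * k y`, which vanishes on `S`, transports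
along `k` and extends to a map `T → T` vanishing on `S`; hence it is zero and `k` is a ring map.
-/

/-! ### Nonsingularity and maximal left rings of quotients -/

/-- An essential left ideal of `A`: one intersecting every nonzero left ideal
nontrivially. -/
def IsEssentialLeftIdeal (A : Type*) [Ring A] (I : Ideal A) : Prop :=
  ∀ J : Ideal A, J ≠ ⊥ → I ⊓ J ≠ ⊥

/-- A ring is left non-singular if its singular left ideal is zero, i.e. no nonzero
element has an essential left annihilator. -/
def IsLeftNonsingular (A : Type*) [Ring A] : Prop :=
  ∀ a : A, IsEssentialLeftIdeal A (LinearMap.ker (LinearMap.toSpanSingleton A A a)) → a = 0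

/-- `j : S → Q` is a dense (rational) ring extension: `j` is injective and, for every
`S`-submodule `L` of `Q` containing the image of `S`, every `S`-linear map `L → Q`
vanishing on `S` is zero (i.e. `Hom_S(L/S, Q) = 0`). -/
def IsDenseRingExtension {S Q : Type*} [Ring S] [Ring Q] (j : S →+* Q) : Prop :=
  Function.Injective j ∧
  ∀ (L : Set Q), (∀ s : S, j s ∈ L) → (∀ x ∈ L, ∀ y ∈ L, x + y ∈ L) →
    (∀ s : S, ∀ x ∈ L, j s * x ∈ L) →
    ∀ f : Q → Q,
      (∀ x ∈ L, ∀ y ∈ L, f (x + y) = f x + f y) →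
      (∀ s : S, ∀ x ∈ L, f (j s * x) = j s * f x) →
      (∀ s : S, f (j s) = 0) →
      ∀ x ∈ L, f x = 0

universe uq

/-- `j : S → Q` realises `Q` as the maximal left ring of quotients `Q_max^l(S)` of `S`:
it is a dense (rational) extension of `S` in which every dense extension of `S` embeds
over `S`.  This characterises `Q_max^l(S)` (the biendomorphism ring of the injective
hull of `S` as a left `S`-module) up to ring isomorphism fixing `S`. -/
def IsMaximalLeftQuotientRing {S : Type*} {Q : Type uq} [Ring S] [Ring Q] (j : S →+* Q) :
    Prop :=
  IsDenseRingExtension j ∧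
  ∀ (Q' : Type uq) [Ring Q'] (j' : S →+* Q'), IsDenseRingExtension j' →
    ∃ k : Q' →+* Q, k.comp j' = j

section DenseExtension

variable {S Q : Type*} [Ring S] [Ring Q] [Module S Q] {j : S →+* Q}

theorem isDenseRingExtension_iff (hj : ∀ (s : S) (q : Q), s • q = j s * q) :
    IsDenseRingExtension j ↔ Function.Injective j ∧
      ∀ (L : Submodule S Q) (hL : ∀ s, j s ∈ L) (f : L →ₗ[S] Q),
        (∀ s, f ⟨j s, hL s⟩ = 0) → f = 0 := by
  classical
  refine and_congr_right fun _ =>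
    ⟨fun hd L hL f hf => ?_, fun hd L hS hadd hmul f fadd fmul hfS => ?_⟩
  · let F : Q → Q := fun x => if h : x ∈ L then f ⟨x, h⟩ else 0
    have hF : ∀ x (hx : x ∈ L), F x = f ⟨x, hx⟩ := fun x hx => dif_pos hx
    ext ⟨x, hx⟩
    rw [← hF x hx]
    refine hd L hL (fun x hx y hy => L.add_mem hx hy) (fun s x hx => hj s x ▸ L.smul_mem s hx) F
      (fun x hx y hy => ?_) (fun s x hx => ?_) (fun s => (hF _ _).trans (hf s)) x hx
    · rw [hF x hx, hF y hy, hF _ (L.add_mem hx hy), ← map_add]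
      rfl
    · rw [hF x hx, hF _ (hj s x ▸ L.smul_mem s hx), ← hj s (f ⟨x, hx⟩), ← map_smul]
      congr 1
      exact Subtype.ext (hj s x).symm
  · let L' : Submodule S Q :=
      { carrier := L
        add_mem' := fun ha hb => hadd _ ha _ hb
        zero_mem' := by simpa using hS 0
        smul_mem' := fun s x hx => (hj s x).symm ▸ hmul s x hx }
    let f' : L' →ₗ[S] Q :=
      { toFun := fun x => f x
        map_add' := fun x y => fadd x x.2 y y.2
        map_smul' := fun s x => by simpa [hj] using fmul s x x.2 }
    intro x hx
    exact LinearMap.congr_fun (hd L' hS f' hfS) ⟨x, hx⟩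

theorem IsDenseRingExtension.injective_of_injective_comp
    (hj : ∀ (s : S) (q : Q), s • q = j s * q) (hd : IsDenseRingExtension j)
    {M : Type*} [AddCommGroup M] [Module S M] (k : Q →ₗ[S] M)
    (hk : Function.Injective (k ∘ j)) : Function.Injective k := by
  let jₗ : S →ₗ[S] Q := LinearMap.toSpanSingleton S Q 1
  have hjₗ : ∀ s, jₗ s = j s := fun s => by simp [jₗ, hj]
  have hkj : Function.Injective (k ∘ₗ jₗ) := by
    simpa [Function.comp_def, hjₗ] using hk
  let e := LinearEquiv.ofInjective (k ∘ₗ jₗ) hkj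
  -- On `L = k⁻¹(k(S))` the map `x ↦ x - j(e⁻¹(k x))` vanishes on `S` and is the identity on
  -- `ker k`.
  let L := (LinearMap.range (k ∘ₗ jₗ)).comap k
  let kL : L →ₗ[S] LinearMap.range (k ∘ₗ jₗ) := k.restrict fun _ hx => hx
  let f : L →ₗ[S] Q := L.subtype - jₗ ∘ₗ e.symm.toLinearMap ∘ₗ kL
  have hL : ∀ s, j s ∈ L := fun s => ⟨s, by simp [hjₗ]⟩
  have hf : f = 0 := by
    refine ((isDenseRingExtension_iff hj).1 hd).2 L hL f fun s => ?_
    have hkL : kL ⟨j s, hL s⟩ = e s := Subtype.ext (by simp [kL, e, hjₗ])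
    simp [f, hkL, hjₗ]
  refine (injective_iff_map_eq_zero k).2 fun q hq => ?_
  have hqL : q ∈ L := by simp [L, hq]
  have hkL : kL ⟨q, hqL⟩ = 0 := Subtype.ext hq
  simpa [f, hkL] using LinearMap.congr_fun hf ⟨q, hqL⟩

end DenseExtension

universe u

section InjectiveExtension

variable {T : Type u} [Ring T] {S : Subring T} [Module.Injective S T]

theorem isDenseRingExtension_subtype_of_injective
    (hhom : ∀ G : T →ₗ[S] T, (∀ s : S, G s = 0) → G = 0) :
    IsDenseRingExtension S.subtype := by
  refine (isDenseRingExtension_iff fun _ _ => rfl).2 ⟨Subtype.coe_injective, fun L hL f hf => ?_⟩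
  obtain ⟨G, hG⟩ := Module.Injective.out L.subtype L.injective_subtype f
  have hG0 : G = 0 := hhom G fun s => (hG ⟨s, hL s⟩).trans (hf s)
  ext x
  simpa [hG0] using (hG x).symm

theorem map_mul_of_injective_linearMap (hhom : ∀ G : T →ₗ[S] T, (∀ s : S, G s = 0) → G = 0)
    {Q : Type u} [Ring Q] [Module S Q] {j : S →+* Q} (hj : ∀ (s : S) (q : Q), s • q = j s * q)
    (k : Q →ₗ[S] T) (hk : Function.Injective k) (hkj : ∀ s, k (j s) = s) (x y : Q) :
    k (x * y) = k x * k y := by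
  have hk_mul : ∀ (s : S) q, k (j s * q) = s * k q := fun s q => by
    rw [← hj, map_smul, Subring.smul_def, smul_eq_mul]
  let h : Q →ₗ[S] T :=
    { toFun := fun a => k (a * y) - k a * k y
      map_add' := fun a b => by simp only [add_mul, map_add]; abel
      map_smul' := fun s a => by
        simp only [hj, mul_assoc, hk_mul, RingHom.id_apply, Subring.smul_def, smul_eq_mul,
          mul_sub] }
  obtain ⟨G, hG⟩ := Module.Injective.out k hk h
  have hG0 : G = 0 := hhom G fun s => by
    rw [← hkj, hG]
    simp [h, hkj, hk_mul]
  exact sub_eq_zero.mp ((hG x).symm.trans (by rw [hG0]; rfl))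

theorem exists_ringHom_comp_eq_subtype_of_injective
    (hhom : ∀ G : T →ₗ[S] T, (∀ s : S, G s = 0) → G = 0)
    {Q : Type u} [Ring Q] (j : S →+* Q) (hd : IsDenseRingExtension j) :
    ∃ k : Q →+* T, k.comp j = S.subtype := by
  let _ : Module S Q := Module.compHom Q j
  have hj : ∀ (s : S) (q : Q), s • q = j s * q := fun _ _ => rfl
  obtain ⟨k, hk⟩ := Module.Injective.out (LinearMap.toSpanSingleton S Q 1)
    (fun a b hab => hd.1 (by simpa [hj] using hab)) (LinearMap.toSpanSingleton S T 1)
  have hkj : ∀ s, k (j s) = s := fun s => by simpa [hj, Subring.smul_def] using hk s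
  have hinj := hd.injective_of_injective_comp hj k (by
    simp only [Function.comp_def, hkj]
    exact Subtype.coe_injective)
  exact ⟨{ k.toAddMonoidHom with
    map_one' := by simpa using hkj 1
    map_mul' := map_mul_of_injective_linearMap hhom hj k hinj hkj }, RingHom.ext hkj⟩

end InjectiveExtension

theorem maximal_left_quotient_ring_of_injective
    {T : Type uq} [Ring T] (S : Subring T)
    (hhom : ∀ f : T → T, (∀ x y : T, f (x + y) = f x + f y) →
      (∀ (s : S) (x : T), f ((s : T) * x) = (s : T) * f x) →
      (∀ s : S, f (s : T) = 0) → ∀ x : T, f x = 0)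
    (hinj : Module.Injective S T) :
    IsMaximalLeftQuotientRing (S.subtype : S →+* T) := by
  have hhomₗ : ∀ G : T →ₗ[S] T, (∀ s : S, G s = 0) → G = 0 :=
    fun G hG => LinearMap.ext (hhom G (map_add G) (map_smul G) hG)
  exact ⟨isDenseRingExtension_subtype_of_injective hhomₗ,
    fun _ _ j hd => exists_ringHom_comp_eq_subtype_of_injective hhomₗ j hd⟩
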